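/- arXiv:2011.14605 — 5 statements merged into one kernel-verified Lean document; each statement's English description precedes it below -/
import Mathlib

section
/- For s > s₀ and r ∈ ℝ define σ(s;r) = ∫₀¹ (1/(2H_p(p;s)²) - H(p;s) - Ω(p) + Ω(1) + r) H_p(p;s) dp, where H_p(p;s) = (s² - 2Ω(p))^{-1/2}. Then ∂_s σ(s;r) = -s (r - R(s)) ∫₀¹ H_p(p;s)³ dp. -/
/-!
With `q = s² - 2Ω`, so that `H_p = q^(-1/2)` and `1/(2 H_p²) = q/2`, the integrand of `σ` is
`q^(1/2) + (r + Ω(1) - s²/2) q^(-1/2) - H H_p`, and `H H_p` is the derivative of `H²/2`. Hence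
`σ(s;r) = ∫ q^(1/2) + (r + Ω(1) - s²/2) d(s) - d(s)²/2` for `s > s₀`. Each `∫₀¹ (s² - 2Ω)^α`
can be differentiated under the integral sign (near `s`, `s² - 2Ω` stays bounded away from `0`),
with derivative `2sα ∫₀¹ (s² - 2Ω)^(α-1)`, and the three contributions combine to
`-s (r - R(s)) ∫ q^(-3/2)`.
-/

open Real MeasureTheory Set Filter Topology

theorem hasDerivAt_intervalIntegral_rpow_sub {g : ℝ → ℝ} {a b x : ℝ}
    (hg : ContinuousOn g (uIcc a b)) (hx : ∀ p ∈ uIcc a b, g p < x) (α : ℝ) :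
    HasDerivAt (fun y => ∫ p in a..b, (y - g p) ^ α)
      (α * ∫ p in a..b, (x - g p) ^ (α - 1)) x := by
  rw [← intervalIntegral.integral_const_mul]
  obtain ⟨p₀, hp₀, hmax⟩ := isCompact_uIcc.exists_isMaxOn nonempty_uIcc hg
  obtain ⟨ε, hε, hgap₀⟩ : ∃ ε > 0, x - g p₀ = 2 * ε :=
    ⟨(x - g p₀) / 2, half_pos (sub_pos.2 (hx p₀ hp₀)), by ring⟩
  have hgap : ∀ y ∈ Metric.closedBall x ε, ∀ p ∈ uIcc a b, 0 < y - g p := by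
    intro y hy p hp
    have hyx := (abs_le.1 (Metric.mem_closedBall.1 hy)).1
    have hgp : g p ≤ g p₀ := hmax hp
    linarith
  have hcont : ∀ y ∈ Metric.closedBall x ε,
      ContinuousOn (fun p => (y - g p) ^ α) (uIcc a b) :=
    fun y hy => (continuousOn_const.sub hg).rpow_const fun p hp => Or.inl (hgap y hy p hp).ne'
  have hderiv : ∀ y ∈ Metric.closedBall x ε, ∀ p ∈ uIcc a b,
      HasDerivAt (fun y => (y - g p) ^ α) (α * (y - g p) ^ (α - 1)) y := fun y hy p hp => by
    simpa using ((hasDerivAt_id y).sub_const (g p)).rpow_const (p := α)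
      (Or.inl (hgap y hy p hp).ne')
  have hF'cont : ContinuousOn (fun z : ℝ × ℝ => α * (z.1 - g z.2) ^ (α - 1))
      (Metric.closedBall x ε ×ˢ uIcc a b) :=
    continuousOn_const.mul <|
      (continuousOn_fst.sub (hg.comp continuousOn_snd fun z hz => hz.2)).rpow_const
        fun z hz => Or.inl (hgap z.1 hz.1 z.2 hz.2).ne'
  obtain ⟨C, hC⟩ :=
    ((isCompact_closedBall x ε).prod isCompact_uIcc).exists_bound_of_continuousOn hF'cont
  have hx₀ : x ∈ Metric.closedBall x ε := Metric.mem_closedBall_self hε.le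
  refine (intervalIntegral.hasDerivAt_integral_of_dominated_loc_of_deriv_le
    (μ := volume) (F := fun y p => (y - g p) ^ α)
    (F' := fun y p => α * (y - g p) ^ (α - 1)) (bound := fun _ => C)
    (Metric.ball_mem_nhds x hε) ?_ ((hcont x hx₀).intervalIntegrable) ?_ ?_
    intervalIntegrable_const ?_).2
  · filter_upwards [Metric.ball_mem_nhds x hε] with y hy
    exact ((hcont y (Metric.ball_subset_closedBall hy)).mono uIoc_subset_uIcc)
      |>.aestronglyMeasurable measurableSet_uIoc
  · exact ((continuousOn_const.mul ((continuousOn_const.sub hg).rpow_const fun p hp =>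
      Or.inl (hgap x hx₀ p hp).ne')).mono uIoc_subset_uIcc).aestronglyMeasurable
      measurableSet_uIoc
  · exact .of_forall fun t ht y hy =>
      hC (y, t) ⟨Metric.ball_subset_closedBall hy, uIoc_subset_uIcc ht⟩
  · exact .of_forall fun t ht y hy =>
      hderiv y (Metric.ball_subset_closedBall hy) t (uIoc_subset_uIcc ht)

theorem integral_primitive_mul_eq_sq_div_two {f : ℝ → ℝ} {a b : ℝ} (hab : a ≤ b)
    (hf : ContinuousOn f (Icc a b)) :
    ∫ p in a..b, (∫ t in a..p, f t) * f p = (∫ t in a..b, f t) ^ 2 / 2 := by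
  have hF : ContinuousOn (fun p => ∫ t in a..p, f t) (Icc a b) := by
    simpa only [uIcc_of_le hab] using
      intervalIntegral.continuousOn_primitive_interval' (hf.intervalIntegrable_of_Icc hab)
        left_mem_uIcc
  have hderiv : ∀ p ∈ Ioo a b, HasDerivWithinAt (fun p => (∫ t in a..p, f t) ^ 2 / 2)
      ((∫ t in a..p, f t) * f p) (Ioi p) p := fun p hp => by
    have hprim : HasDerivAt (fun p => ∫ t in a..p, f t) (f p) p :=
      intervalIntegral.integral_hasDerivAt_right
        ((hf.mono (Icc_subset_Icc le_rfl hp.2.le)).intervalIntegrable_of_Icc hp.1.le)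
        ⟨Icc a b, Icc_mem_nhds hp.1 hp.2, hf.aestronglyMeasurable measurableSet_Icc⟩
        (hf.continuousAt (Icc_mem_nhds hp.1 hp.2))
    refine ((hprim.pow 2).div_const 2).hasDerivWithinAt.congr_deriv ?_
    push_cast
    ring
  have hsq : ContinuousOn (fun p => (∫ t in a..p, f t) ^ 2 / 2) (Icc a b) :=
    (hF.pow 2).div_const 2
  have hint : IntervalIntegrable (fun p => (∫ t in a..p, f t) * f p) volume a b :=
    (hF.mul hf).intervalIntegrable_of_Icc hab
  rw [intervalIntegral.integral_eq_sub_of_hasDeriv_right_of_le hab hsq hderiv hint,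
    intervalIntegral.integral_same]
  ring

theorem hasDerivAt_intervalIntegral_rpow_sq_sub {g : ℝ → ℝ} {a b s : ℝ}
    (hg : ContinuousOn g (uIcc a b)) (hs : ∀ p ∈ uIcc a b, g p < s ^ 2) (α : ℝ) :
    HasDerivAt (fun s => ∫ p in a..b, (s ^ 2 - g p) ^ α)
      (2 * s * α * ∫ p in a..b, (s ^ 2 - g p) ^ (α - 1)) s := by
  refine (HasDerivAt.comp (h := fun s : ℝ => s ^ 2) s
    (hasDerivAt_intervalIntegral_rpow_sub hg hs α) (hasDerivAt_pow 2 s)).congr_deriv ?_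
  push_cast
  ring

theorem one_div_two_mul_rpow_neg_half_sq {q : ℝ} (hq : 0 ≤ q) :
    1 / (2 * (q ^ (-(1/2) : ℝ)) ^ 2) = q / 2 := by
  rw [← rpow_mul_natCast hq]
  norm_num [rpow_neg_one]
  ring

theorem rpow_half_eq_mul_rpow_neg_half {q : ℝ} (hq : 0 < q) :
    q ^ (1/2 : ℝ) = q * q ^ (-(1/2) : ℝ) := by
  conv_rhs => enter [1]; rw [← rpow_one q]
  rw [← rpow_add hq]
  norm_num

theorem rpow_neg_half_pow_three {q : ℝ} (hq : 0 ≤ q) :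
    (q ^ (-(1/2) : ℝ)) ^ 3 = q ^ (-(1/2) - 1 : ℝ) := by
  rw [← rpow_mul_natCast hq]
  norm_num

theorem lt_sq_of_sqrt_sSup_image_lt {X : Type*} [TopologicalSpace X] {K : Set X} {f : X → ℝ}
    (hK : IsCompact K) (hf : ContinuousOn f K) {s : ℝ} (hs : √(sSup (f '' K)) < s) {p : X}
    (hp : p ∈ K) : f p < s ^ 2 :=
  (le_csSup (hK.image_of_continuousOn hf).bddAbove (mem_image_of_mem f hp)).trans_lt
    (lt_sq_of_sqrt_lt hs)

section FlowForce

variable {Ω : ℝ → ℝ} {s : ℝ}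

theorem continuousOn_rpow_sq_sub (hΩ : ContinuousOn Ω (Icc 0 1))
    (hs : ∀ p ∈ Icc (0:ℝ) 1, 2 * Ω p < s ^ 2) (α : ℝ) :
    ContinuousOn (fun p => (s ^ 2 - 2 * Ω p) ^ α) (Icc 0 1) :=
  (continuousOn_const.sub (continuousOn_const.mul hΩ)).rpow_const
    fun p hp => Or.inl (sub_pos.2 (hs p hp)).ne'

theorem flowForce_eq (hΩ : ContinuousOn Ω (Icc 0 1))
    (hs : ∀ p ∈ Icc (0:ℝ) 1, 2 * Ω p < s ^ 2) (r : ℝ) :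
    ∫ p in (0:ℝ)..1, (1 / (2 * ((s ^ 2 - 2 * Ω p) ^ (-(1/2) : ℝ)) ^ 2)
        - (∫ τ in (0:ℝ)..p, (s ^ 2 - 2 * Ω τ) ^ (-(1/2) : ℝ)) - Ω p + Ω 1 + r)
        * (s ^ 2 - 2 * Ω p) ^ (-(1/2) : ℝ)
      = (∫ p in (0:ℝ)..1, (s ^ 2 - 2 * Ω p) ^ (1/2 : ℝ))
        + (r + Ω 1 - s ^ 2 / 2) * (∫ p in (0:ℝ)..1, (s ^ 2 - 2 * Ω p) ^ (-(1/2) : ℝ))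
        - (∫ p in (0:ℝ)..1, (s ^ 2 - 2 * Ω p) ^ (-(1/2) : ℝ)) ^ 2 / 2 := by
  have hc := continuousOn_rpow_sq_sub hΩ hs
  have hint : ∀ α : ℝ, IntervalIntegrable (fun p => (s ^ 2 - 2 * Ω p) ^ α) volume 0 1 :=
    fun α => (hc α).intervalIntegrable_of_Icc zero_le_one
  have hprim : ContinuousOn (fun p => ∫ τ in (0:ℝ)..p, (s ^ 2 - 2 * Ω τ) ^ (-(1/2) : ℝ))
      (Icc 0 1) := by
    simpa only [uIcc_of_le zero_le_one] using
      intervalIntegral.continuousOn_primitive_interval' (hint _) left_mem_uIcc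
  have hprod : IntervalIntegrable
      (fun p => (∫ τ in (0:ℝ)..p, (s ^ 2 - 2 * Ω τ) ^ (-(1/2) : ℝ))
        * (s ^ 2 - 2 * Ω p) ^ (-(1/2) : ℝ)) volume 0 1 :=
    (hprim.mul (hc _)).intervalIntegrable_of_Icc zero_le_one
  rw [intervalIntegral.integral_congr (g := fun p => (s ^ 2 - 2 * Ω p) ^ (1/2 : ℝ)
      + (r + Ω 1 - s ^ 2 / 2) * (s ^ 2 - 2 * Ω p) ^ (-(1/2) : ℝ)
      - (∫ τ in (0:ℝ)..p, (s ^ 2 - 2 * Ω τ) ^ (-(1/2) : ℝ))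
        * (s ^ 2 - 2 * Ω p) ^ (-(1/2) : ℝ)),
    intervalIntegral.integral_sub ((hint _).add ((hint _).const_mul _)) hprod,
    intervalIntegral.integral_add (hint _) ((hint _).const_mul _),
    intervalIntegral.integral_const_mul,
    integral_primitive_mul_eq_sq_div_two zero_le_one (hc _)]
  intro p hp
  have hq : 0 < s ^ 2 - 2 * Ω p :=
    sub_pos.2 (hs p (by simpa only [uIcc_of_le zero_le_one] using hp))
  dsimp only
  rw [one_div_two_mul_rpow_neg_half_sq hq.le, rpow_half_eq_mul_rpow_neg_half hq]
  ring

end FlowForce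

theorem stmt6 (ω Ω : ℝ → ℝ) (hωcont : ContinuousOn ω (Icc 0 1))
    (hΩ : ∀ p, Ω p = ∫ t in (0:ℝ)..p, ω t)
    (s₀ : ℝ) (hs₀ : s₀ = Real.sqrt (sSup ((fun p => 2 * Ω p) '' Icc (0:ℝ) 1)))
    (Hp H : ℝ → ℝ → ℝ)
    (hHp : ∀ p s, Hp p s = (s ^ 2 - 2 * Ω p) ^ (-(1/2) : ℝ))
    (hH : ∀ p s, H p s = ∫ τ in (0:ℝ)..p, Hp τ s)
    (d R : ℝ → ℝ) (hd : ∀ s, d s = H 1 s)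
    (hR : ∀ s, R s = s ^ 2 / 2 - Ω 1 + d s)
    (σ : ℝ → ℝ → ℝ)
    (hσ : ∀ s r, σ s r = ∫ p in (0:ℝ)..1,
        (1 / (2 * (Hp p s) ^ 2) - H p s - Ω p + Ω 1 + r) * Hp p s) :
    ∀ r s, s₀ < s →
      HasDerivAt (fun s' => σ s' r)
        (-(s * (r - R s)) * ∫ p in (0:ℝ)..1, (Hp p s) ^ 3) s := by
  intro r s hs
  have hΩc : ContinuousOn Ω (Icc 0 1) := by
    simpa only [uIcc_of_le zero_le_one, ← hΩ] using
      intervalIntegral.continuousOn_primitive_interval' (μ := volume)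
        (hωcont.intervalIntegrable_of_Icc zero_le_one) left_mem_uIcc
  have hbelow : ∀ s', s₀ < s' → ∀ p ∈ Icc (0:ℝ) 1, 2 * Ω p < s' ^ 2 := fun s' hs' p hp =>
    lt_sq_of_sqrt_sSup_image_lt isCompact_Icc (continuousOn_const.mul hΩc) (hs₀ ▸ hs') hp
  let I : ℝ → ℝ → ℝ := fun α s => ∫ p in (0:ℝ)..1, (s ^ 2 - 2 * Ω p) ^ α
  have hI : ∀ α, HasDerivAt (I α) (2 * s * α * I (α - 1) s) s := fun α =>
    hasDerivAt_intervalIntegral_rpow_sq_sub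
      (by rw [uIcc_of_le zero_le_one]; exact continuousOn_const.mul hΩc)
      (by rw [uIcc_of_le zero_le_one]; exact hbelow s hs) α
  have hclosed : (fun s' => σ s' r) =ᶠ[𝓝 s]
      fun s' => I (1/2) s' + (r + Ω 1 - s' ^ 2 / 2) * I (-(1/2)) s' - I (-(1/2)) s' ^ 2 / 2 := by
    filter_upwards [Ioi_mem_nhds hs] with s' hs'
    simp only [hσ, hH, hHp]
    exact flowForce_eq hΩc (hbelow s' hs') r
  have hd' : d s = I (-(1/2)) s := by simp only [hd, hH, hHp, I]
  have hHp3 : ∫ p in (0:ℝ)..1, (Hp p s) ^ 3 = I (-(1/2) - 1) s := by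
    refine intervalIntegral.integral_congr fun p hp => ?_
    rw [uIcc_of_le zero_le_one] at hp
    rw [hHp, rpow_neg_half_pow_three (sub_pos.2 (hbelow s hs p hp)).le]
  have hc : HasDerivAt (fun s' => r + Ω 1 - s' ^ 2 / 2) (-s) s := by
    simpa using ((hasDerivAt_pow 2 s).div_const 2).const_sub (r + Ω 1)
  refine ((((hI (1/2)).add (hc.mul (hI (-(1/2))))).sub (((hI _).pow 2).div_const 2))
    |>.congr_of_eventuallyEq hclosed).congr_deriv ?_
  rw [hR, hd', hHp3, show (1/2 : ℝ) - 1 = -(1/2) by norm_num]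
  ring
end

section
/- Fix r with R_c < r < R_0, and let s₋(r) < s_c < s₊(r) be the two solutions of R(s) = r. Then the function s ↦ σ(s;r) is strictly increasing on (s₀, s₋(r)), strictly decreasing on (s₋(r), s₊(r)), and strictly increasing on (s₊(r), ∞) with σ(s;r) → +∞ as s → ∞. -/
/-!
With `X = s² - 2Ω`, the integrand of `σ` is `X^{1/2} - (s²/2 - Ω(1) - r) X^{-1/2} - H H_p`,
and `∫₀¹ H H_p = d²/2`; hence `σ = A - (s²/2 - Ω(1) - r) d - d²/2` with `A = ∫₀¹ X^{1/2}`.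
Differentiating under the integral sign, `A' = s d` and `d' = -s e` with `e = ∫₀¹ X^{-3/2} > 0`,
so `∂σ/∂s = s e (R - r)` and the sign pattern of `R - r` is the monotonicity pattern of `σ`.
For large `s`, with `C ≥ max Ω`, one has `A ≥ √(s² - 2C)` and `d ≤ (s² - 2C)^{-1/2}`,
which gives `σ ≥ s/2 - O(1)`.
-/

open Real MeasureTheory Set Filter Topology intervalIntegral

section SquareMinusPotential

variable {g : ℝ → ℝ} {a b x : ℝ}

lemma continuousOn_sq_sub_rpow (hg : ContinuousOn g (uIcc a b))
    (hx : ∀ p ∈ uIcc a b, g p < x ^ 2) (c : ℝ) :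
    ContinuousOn (fun p => (x ^ 2 - g p) ^ c) (uIcc a b) :=
  (continuousOn_const.sub hg).rpow_const fun p hp => Or.inl (sub_pos.2 (hx p hp)).ne'

lemma intervalIntegrable_sq_sub_rpow (hg : ContinuousOn g (uIcc a b))
    (hx : ∀ p ∈ uIcc a b, g p < x ^ 2) (c : ℝ) :
    IntervalIntegrable (fun p => (x ^ 2 - g p) ^ c) volume a b :=
  (continuousOn_sq_sub_rpow hg hx c).intervalIntegrable

lemma hasDerivAt_integral_sq_sub_rpow (hg : ContinuousOn g (uIcc a b)) {s₀ s : ℝ}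
    (hs₀ : 0 ≤ s₀) (hgs₀ : ∀ p ∈ uIcc a b, g p ≤ s₀ ^ 2) (hs : s₀ < s) (c : ℝ) :
    HasDerivAt (fun x => ∫ p in a..b, (x ^ 2 - g p) ^ c)
      (2 * s * c * ∫ p in a..b, (s ^ 2 - g p) ^ (c - 1)) s := by
  set ε := (s - s₀) / 2 with hε_def
  have hε : 0 < ε := by linarith
  have hlt : ∀ x ∈ Metric.closedBall s ε, ∀ p ∈ uIcc a b, g p < x ^ 2 := by
    intro x hx p hp
    have hx' : s₀ < x := by
      rw [Metric.mem_closedBall, dist_eq, abs_le] at hx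
      linarith [hx.1]
    nlinarith [hgs₀ p hp]
  obtain ⟨B, hB⟩ :=
    ((isCompact_closedBall s ε).prod isCompact_uIcc).exists_bound_of_continuousOn
    (f := fun q : ℝ × ℝ => 2 * q.1 * c * (q.1 ^ 2 - g q.2) ^ (c - 1)) <|
      (continuousOn_fst.const_mul 2 |>.mul continuousOn_const).mul <|
        ((continuousOn_fst.pow 2).sub (hg.comp continuousOn_snd fun q hq => hq.2)).rpow_const
          fun q hq => Or.inl (sub_pos.2 (hlt q.1 hq.1 q.2 hq.2)).ne'
  have hball : Metric.ball s ε ⊆ Metric.closedBall s ε := Metric.ball_subset_closedBall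
  have hderiv := hasDerivAt_integral_of_dominated_loc_of_deriv_le (bound := fun _ => B)
    (F' := fun x p => 2 * x * c * (x ^ 2 - g p) ^ (c - 1)) (Metric.ball_mem_nhds s hε)
    (eventually_of_mem (Metric.ball_mem_nhds s hε) fun x hx =>
      (intervalIntegrable_iff.1 <| intervalIntegrable_sq_sub_rpow hg
        (hlt x (hball hx)) c).aestronglyMeasurable)
    (intervalIntegrable_sq_sub_rpow hg (hlt s (Metric.mem_closedBall_self hε.le)) c)
    (intervalIntegrable_iff.1 <| (intervalIntegrable_sq_sub_rpow hg
        (hlt s (Metric.mem_closedBall_self hε.le)) (c - 1)).const_mul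
          (2 * s * c)).aestronglyMeasurable
    (ae_of_all _ fun p hp x hx => hB (x, p) ⟨hball hx, uIoc_subset_uIcc hp⟩)
    intervalIntegrable_const
    (ae_of_all _ fun p hp x hx => by
      have hsq : HasDerivAt (fun y : ℝ => y ^ 2 - g p) (2 * x) x := by
        simpa using (hasDerivAt_pow 2 x).sub_const (g p)
      exact hsq.rpow_const (Or.inl (sub_pos.2 (hlt x (hball hx) p (uIoc_subset_uIcc hp))).ne'))
  simpa only [intervalIntegral.integral_const_mul] using hderiv.2

lemma integral_primitive_mul_self {h : ℝ → ℝ} (hh : ContinuousOn h (uIcc a b)) :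
    ∫ p in a..b, (∫ τ in a..p, h τ) * h p = (∫ p in a..b, h p) ^ 2 / 2 := by
  set P := fun p => ∫ τ in a..p, h τ
  have hP : ContinuousOn P (uIcc a b) :=
    continuousOn_primitive_interval (hh.integrableOn_compact isCompact_uIcc)
  have hP' : ∀ p ∈ Ioo (min a b) (max a b), HasDerivAt P (h p) p := fun p hp =>
    integral_hasDerivAt_right
      (hh.mono (uIcc_subset_uIcc_left (Ioo_subset_Icc_self hp))).intervalIntegrable
      ((hh.mono Ioo_subset_Icc_self).stronglyMeasurableAtFilter isOpen_Ioo p hp)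
      (hh.continuousAt (Icc_mem_nhds hp.1 hp.2))
  have key := integral_eq_sub_of_hasDeriv_right (f' := fun p => P p * h p)
    ((hP.pow 2).div_const 2)
    (fun p hp => (((hP' p hp).pow 2).div_const 2).hasDerivWithinAt.congr_deriv (by ring))
    (hP.mul hh).intervalIntegrable
  simpa [P] using key

end SquareMinusPotential

lemma rpow_neg_half_eq_inv_sqrt {X : ℝ} (hX : 0 ≤ X) : X ^ (-(1/2) : ℝ) = (√X)⁻¹ := by
  rw [rpow_neg hX, sqrt_eq_rpow]

lemma strictMonoOn_of_hasDerivAt_pos {f f' : ℝ → ℝ} {D : Set ℝ} (hD : Convex ℝ D)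
    (hDo : IsOpen D) (hf : ∀ x ∈ D, HasDerivAt f (f' x) x) (hf' : ∀ x ∈ D, 0 < f' x) :
    StrictMonoOn f D :=
  strictMonoOn_of_hasDerivWithinAt_pos hD (fun x hx => (hf x hx).continuousAt.continuousWithinAt)
    (by simpa only [hDo.interior_eq] using fun x hx => (hf x hx).hasDerivWithinAt)
    (by rwa [hDo.interior_eq])

lemma strictAntiOn_of_hasDerivAt_neg {f f' : ℝ → ℝ} {D : Set ℝ} (hD : Convex ℝ D)
    (hDo : IsOpen D) (hf : ∀ x ∈ D, HasDerivAt f (f' x) x) (hf' : ∀ x ∈ D, f' x < 0) :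
    StrictAntiOn f D :=
  strictAntiOn_of_hasDerivWithinAt_neg hD (fun x hx => (hf x hx).continuousAt.continuousWithinAt)
    (by simpa only [hDo.interior_eq] using fun x hx => (hf x hx).hasDerivWithinAt)
    (by rwa [hDo.interior_eq])

noncomputable def powerIntegral (Ω : ℝ → ℝ) (c s : ℝ) : ℝ :=
  ∫ p in (0:ℝ)..1, (s ^ 2 - 2 * Ω p) ^ c

noncomputable def sigmaClosedForm (Ω : ℝ → ℝ) (r s : ℝ) : ℝ :=
  powerIntegral Ω (1/2) s - (s ^ 2 / 2 - Ω 1 - r) * powerIntegral Ω (-(1/2)) s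
    - powerIntegral Ω (-(1/2)) s ^ 2 / 2

section Potential

variable {Ω : ℝ → ℝ} {s : ℝ}

lemma continuousOn_sq_sub_two_mul_rpow (hΩ : ContinuousOn Ω (Icc 0 1))
    (hs : ∀ p ∈ Icc (0:ℝ) 1, 2 * Ω p < s ^ 2) (c : ℝ) :
    ContinuousOn (fun p => (s ^ 2 - 2 * Ω p) ^ c) (uIcc 0 1) := by
  rw [← uIcc_of_le zero_le_one] at hΩ hs
  exact continuousOn_sq_sub_rpow (g := fun p => 2 * Ω p) (continuousOn_const.mul hΩ) hs c

lemma intervalIntegrable_sq_sub_two_mul_rpow (hΩ : ContinuousOn Ω (Icc 0 1))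
    (hs : ∀ p ∈ Icc (0:ℝ) 1, 2 * Ω p < s ^ 2) (c : ℝ) :
    IntervalIntegrable (fun p => (s ^ 2 - 2 * Ω p) ^ c) volume 0 1 :=
  (continuousOn_sq_sub_two_mul_rpow hΩ hs c).intervalIntegrable

lemma powerIntegral_pos (hΩ : ContinuousOn Ω (Icc 0 1))
    (hs : ∀ p ∈ Icc (0:ℝ) 1, 2 * Ω p < s ^ 2) (c : ℝ) : 0 < powerIntegral Ω c s :=
  intervalIntegral_pos_of_pos_on (intervalIntegrable_sq_sub_two_mul_rpow hΩ hs c)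
    (fun p hp => rpow_pos_of_pos (sub_pos.2 (hs p (Ioo_subset_Icc_self hp))) c) zero_lt_one

lemma integral_sigma_integrand_eq (hΩ : ContinuousOn Ω (Icc 0 1))
    (hs : ∀ p ∈ Icc (0:ℝ) 1, 2 * Ω p < s ^ 2) (r : ℝ) :
    ∫ p in (0:ℝ)..1, (1 / (2 * ((s ^ 2 - 2 * Ω p) ^ (-(1/2) : ℝ)) ^ 2)
        - (∫ τ in (0:ℝ)..p, (s ^ 2 - 2 * Ω τ) ^ (-(1/2) : ℝ)) - Ω p + Ω 1 + r)
        * (s ^ 2 - 2 * Ω p) ^ (-(1/2) : ℝ) = sigmaClosedForm Ω r s := by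
  set P := fun p => ∫ τ in (0:ℝ)..p, (s ^ 2 - 2 * Ω τ) ^ (-(1/2) : ℝ)
  have hpoint : EqOn (fun p => (1 / (2 * ((s ^ 2 - 2 * Ω p) ^ (-(1/2) : ℝ)) ^ 2)
        - P p - Ω p + Ω 1 + r) * (s ^ 2 - 2 * Ω p) ^ (-(1/2) : ℝ))
      (fun p => (s ^ 2 - 2 * Ω p) ^ (1/2 : ℝ)
        - (s ^ 2 / 2 - Ω 1 - r) * (s ^ 2 - 2 * Ω p) ^ (-(1/2) : ℝ)
        - P p * (s ^ 2 - 2 * Ω p) ^ (-(1/2) : ℝ)) (uIcc 0 1) := by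
    intro p hp
    rw [uIcc_of_le zero_le_one] at hp
    have hX := sub_pos.2 (hs p hp)
    obtain ⟨q, hq, hqX⟩ : ∃ q, 0 < q ∧ q ^ 2 = s ^ 2 - 2 * Ω p :=
      ⟨_, sqrt_pos.2 hX, sq_sqrt hX.le⟩
    simp only [← hqX, rpow_neg_half_eq_inv_sqrt (sq_nonneg q), ← sqrt_eq_rpow, sqrt_sq hq.le]
    field_simp
    linear_combination -hqX
  have hcont := intervalIntegrable_sq_sub_two_mul_rpow hΩ hs
  have hH := continuousOn_sq_sub_two_mul_rpow hΩ hs (-(1/2))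
  have hP : IntervalIntegrable (fun p => P p * (s ^ 2 - 2 * Ω p) ^ (-(1/2) : ℝ)) volume 0 1 :=
    ((continuousOn_primitive_interval (hH.integrableOn_compact isCompact_uIcc)).mul
      hH).intervalIntegrable
  rw [integral_congr hpoint, integral_sub ((hcont _).sub ((hcont _).const_mul _)) hP,
    integral_sub (hcont _) ((hcont _).const_mul _), intervalIntegral.integral_const_mul,
    integral_primitive_mul_self hH]
  rfl

variable {s₀ : ℝ}

lemma hasDerivAt_powerIntegral (hΩ : ContinuousOn Ω (Icc 0 1)) (hs₀ : 0 ≤ s₀)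
    (hΩs₀ : ∀ p ∈ Icc (0:ℝ) 1, 2 * Ω p ≤ s₀ ^ 2) (hs : s₀ < s) (c : ℝ) :
    HasDerivAt (powerIntegral Ω c) (2 * s * c * powerIntegral Ω (c - 1) s) s := by
  rw [← uIcc_of_le zero_le_one] at hΩ hΩs₀
  exact hasDerivAt_integral_sq_sub_rpow (g := fun p => 2 * Ω p) (continuousOn_const.mul hΩ)
    hs₀ hΩs₀ hs c

lemma hasDerivAt_sigmaClosedForm (hΩ : ContinuousOn Ω (Icc 0 1)) (hs₀ : 0 ≤ s₀)
    (hΩs₀ : ∀ p ∈ Icc (0:ℝ) 1, 2 * Ω p ≤ s₀ ^ 2) (hs : s₀ < s) (r : ℝ) :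
    HasDerivAt (sigmaClosedForm Ω r)
      ((s ^ 2 / 2 - Ω 1 + powerIntegral Ω (-(1/2)) s - r) *
        (s * powerIntegral Ω (-(3/2)) s)) s := by
  have hA := hasDerivAt_powerIntegral hΩ hs₀ hΩs₀ hs (1/2)
  have hd := hasDerivAt_powerIntegral hΩ hs₀ hΩs₀ hs (-(1/2))
  rw [show (1/2 : ℝ) - 1 = -(1/2) by norm_num] at hA
  rw [show (-(1/2) : ℝ) - 1 = -(3/2) by norm_num] at hd
  have hq : HasDerivAt (fun x : ℝ => x ^ 2 / 2 - Ω 1 - r) s s := by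
    simpa using (((hasDerivAt_pow 2 s).div_const 2).sub_const (Ω 1)).sub_const r
  exact ((hA.sub (hq.mul hd)).sub ((hd.pow 2).div_const 2)).congr_deriv (by ring)

lemma le_sigmaClosedForm {C r : ℝ} (hΩ : ContinuousOn Ω (Icc 0 1))
    (hC : ∀ p ∈ Icc (0:ℝ) 1, Ω p ≤ C) (hC0 : 0 ≤ C) (hs : 0 < s) (hK : 1 ≤ s ^ 2 - 2 * C)
    (hc : 0 ≤ s ^ 2 / 2 - Ω 1 - r) (hKc : 0 ≤ s ^ 2 / 2 - 2 * C + Ω 1 + r) :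
    s / 2 + (Ω 1 + r - 2 * C) / s - 1 / 2 ≤ sigmaClosedForm Ω r s := by
  have hKX : ∀ p ∈ Icc (0:ℝ) 1, s ^ 2 - 2 * C ≤ s ^ 2 - 2 * Ω p := fun p hp => by
    linarith [hC p hp]
  have hlt : ∀ p ∈ Icc (0:ℝ) 1, 2 * Ω p < s ^ 2 := fun p hp => by linarith [hKX p hp]
  set t := √(s ^ 2 - 2 * C)
  have ht1 : 1 ≤ t := one_le_sqrt.2 hK
  have hts : t ≤ s := (sqrt_le_left hs.le).2 (by linarith)
  have htK : t ^ 2 = s ^ 2 - 2 * C := sq_sqrt (by linarith)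
  have hA : t ≤ powerIntegral Ω (1/2) s := by
    have := integral_mono_on zero_le_one intervalIntegrable_const
      (intervalIntegrable_sq_sub_two_mul_rpow hΩ hlt (1/2))
      fun p hp => rpow_le_rpow (by linarith) (hKX p hp) (by norm_num)
    simpa [t, sqrt_eq_rpow, powerIntegral] using this
  have hd : powerIntegral Ω (-(1/2)) s ≤ t⁻¹ := by
    have := integral_mono_on zero_le_one (intervalIntegrable_sq_sub_two_mul_rpow hΩ hlt (-(1/2)))
      intervalIntegrable_const
      fun p hp => rpow_le_rpow_of_nonpos (by linarith) (hKX p hp) (by norm_num)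
    rw [← rpow_neg_half_eq_inv_sqrt (by linarith)]
    simpa [powerIntegral] using this
  have hd1 : powerIntegral Ω (-(1/2)) s ^ 2 ≤ 1 :=
    pow_le_one₀ (powerIntegral_pos hΩ hlt _).le (hd.trans (inv_le_one_of_one_le₀ ht1))
  have hcd : (s ^ 2 / 2 - Ω 1 - r) * powerIntegral Ω (-(1/2)) s ≤
      (s ^ 2 / 2 - Ω 1 - r) * t⁻¹ :=
    mul_le_mul_of_nonneg_left hd hc
  have ht : s / 2 + (Ω 1 + r - 2 * C) / s ≤ t - (s ^ 2 / 2 - Ω 1 - r) * t⁻¹ := by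
    calc s / 2 + (Ω 1 + r - 2 * C) / s = (s ^ 2 / 2 - 2 * C + Ω 1 + r) / s := by
          field_simp; ring
      _ ≤ (s ^ 2 / 2 - 2 * C + Ω 1 + r) / t := div_le_div_of_nonneg_left hKc (by linarith) hts
      _ = t - (s ^ 2 / 2 - Ω 1 - r) * t⁻¹ := by
          field_simp; linear_combination (-2) * htK
  unfold sigmaClosedForm
  linarith

lemma tendsto_sigmaClosedForm_atTop (hΩ : ContinuousOn Ω (Icc 0 1)) (r : ℝ) :
    Tendsto (sigmaClosedForm Ω r) atTop atTop := by
  obtain ⟨C₀, hC₀⟩ := isCompact_Icc.bddAbove_image hΩ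
  set C := max C₀ 0
  have hlow : Tendsto (fun s => s / 2 + (Ω 1 + r - 2 * C) / s - 1 / 2) atTop atTop := by
    simpa only [sub_eq_add_neg, id_eq] using ((tendsto_id.atTop_div_const two_pos).atTop_add
      (tendsto_const_nhds.div_atTop tendsto_id)).atTop_add tendsto_const_nhds
  refine tendsto_atTop_mono' _ ?_ hlow
  have hsq := tendsto_pow_atTop (α := ℝ) two_ne_zero
  filter_upwards [eventually_gt_atTop 0, hsq.eventually_ge_atTop (1 + 2 * C),
    hsq.eventually_ge_atTop (2 * (Ω 1 + r)), hsq.eventually_ge_atTop (2 * (2 * C - Ω 1 - r))]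
    with s hs hK hc hKc
  exact le_sigmaClosedForm hΩ
    (fun p hp => (hC₀ (mem_image_of_mem Ω hp)).trans (le_max_left _ _))
    (le_max_right _ _) hs (by linarith) (by linarith) (by linarith)

end Potential

theorem stmt7_general (ω Ω : ℝ → ℝ) (hωcont : ContinuousOn ω (Icc 0 1))
    (hΩ : ∀ p, Ω p = ∫ t in (0:ℝ)..p, ω t)
    (s₀ : ℝ) (hs₀ : s₀ = Real.sqrt (sSup ((fun p => 2 * Ω p) '' Icc (0:ℝ) 1)))
    (Hp H : ℝ → ℝ → ℝ)
    (hHp : ∀ p s, Hp p s = (s ^ 2 - 2 * Ω p) ^ (-(1/2) : ℝ))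
    (hH : ∀ p s, H p s = ∫ τ in (0:ℝ)..p, Hp τ s)
    (d R : ℝ → ℝ) (hd : ∀ s, d s = H 1 s)
    (hR : ∀ s, R s = s ^ 2 / 2 - Ω 1 + d s)
    (σ : ℝ → ℝ → ℝ)
    (hσ : ∀ s r, σ s r = ∫ p in (0:ℝ)..1,
        (1 / (2 * (Hp p s) ^ 2) - H p s - Ω p + Ω 1 + r) * Hp p s)
    (r sm sc sp : ℝ)
    (h1 : s₀ < sm) (h2 : sm < sc) (h3 : sc < sp)
    (hsign1 : ∀ s ∈ Ioo sm sp, R s < r)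
    (hsign2 : ∀ s ∈ Ioo s₀ sm, r < R s)
    (hsign3 : ∀ s ∈ Ioi sp, r < R s) :
    StrictMonoOn (fun s => σ s r) (Ioo s₀ sm) ∧
    StrictAntiOn (fun s => σ s r) (Ioo sm sp) ∧
    StrictMonoOn (fun s => σ s r) (Ioi sp) ∧
    Tendsto (fun s => σ s r) atTop atTop := by
  have hΩc : ContinuousOn Ω (Icc 0 1) := by
    rw [← uIcc_of_le zero_le_one] at hωcont ⊢
    exact (continuousOn_primitive_interval (hωcont.integrableOn_compact isCompact_uIcc)).congr
      fun p _ => hΩ p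
  have hs₀0 : 0 ≤ s₀ := hs₀ ▸ sqrt_nonneg _
  have hΩs₀ : ∀ p ∈ Icc (0:ℝ) 1, 2 * Ω p ≤ s₀ ^ 2 := fun p hp => hs₀ ▸
    (le_csSup (isCompact_Icc.bddAbove_image (continuousOn_const.mul hΩc))
      (mem_image_of_mem _ hp)).trans ((sqrt_le_left (sqrt_nonneg _)).1 le_rfl)
  have hlt : ∀ s, s₀ < s → ∀ p ∈ Icc (0:ℝ) 1, 2 * Ω p < s ^ 2 := fun s hs p hp => by
    nlinarith [hΩs₀ p hp]
  have hσF : EqOn (sigmaClosedForm Ω r) (fun s => σ s r) (Ioi s₀) := fun s hs => by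
    simp only [hσ, hH, hHp, ← integral_sigma_integrand_eq hΩc (hlt s hs) r]
  have hderiv : ∀ s ∈ Ioi s₀, HasDerivAt (sigmaClosedForm Ω r)
      ((R s - r) * (s * powerIntegral Ω (-(3/2)) s)) s := fun s hs => by
    simpa only [hR, hd, hH, hHp, powerIntegral] using
      hasDerivAt_sigmaClosedForm hΩc hs₀0 hΩs₀ hs r
  have hfactor : ∀ s ∈ Ioi s₀, 0 < s * powerIntegral Ω (-(3/2)) s := fun s hs =>
    mul_pos (hs₀0.trans_lt hs) (powerIntegral_pos hΩc (hlt s hs) _)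
  have hsp : Ioi sp ⊆ Ioi s₀ := Ioi_subset_Ioi (h1.trans (h2.trans h3)).le
  have hsmsp : Ioo sm sp ⊆ Ioi s₀ := fun s hs => h1.trans hs.1
  refine ⟨?_, ?_, ?_, (tendsto_sigmaClosedForm_atTop hΩc r).congr'
    (eventually_gt_atTop s₀ |>.mono hσF)⟩
  · exact (strictMonoOn_of_hasDerivAt_pos (convex_Ioo _ _) isOpen_Ioo
      (fun s hs => hderiv s hs.1) fun s hs =>
        mul_pos (sub_pos.2 (hsign2 s hs)) (hfactor s hs.1)).congr (hσF.mono Ioo_subset_Ioi_self)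
  · exact (strictAntiOn_of_hasDerivAt_neg (convex_Ioo _ _) isOpen_Ioo
      (fun s hs => hderiv s (hsmsp hs)) fun s hs =>
        mul_neg_of_neg_of_pos (sub_neg.2 (hsign1 s hs)) (hfactor s (hsmsp hs))).congr
      (hσF.mono hsmsp)
  · exact (strictMonoOn_of_hasDerivAt_pos (convex_Ioi _) isOpen_Ioi
      (fun s hs => hderiv s (hsp hs)) fun s hs =>
        mul_pos (sub_pos.2 (hsign3 s hs)) (hfactor s (hsp hs))).congr (hσF.mono hsp)

theorem stmt7 (ω Ω : ℝ → ℝ) (hωcont : ContinuousOn ω (Icc 0 1))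
    (hΩ : ∀ p, Ω p = ∫ t in (0:ℝ)..p, ω t)
    (s₀ : ℝ) (hs₀ : s₀ = Real.sqrt (sSup ((fun p => 2 * Ω p) '' Icc (0:ℝ) 1)))
    (Hp H : ℝ → ℝ → ℝ)
    (hHp : ∀ p s, Hp p s = (s ^ 2 - 2 * Ω p) ^ (-(1/2) : ℝ))
    (hH : ∀ p s, H p s = ∫ τ in (0:ℝ)..p, Hp τ s)
    (d R : ℝ → ℝ) (hd : ∀ s, d s = H 1 s)
    (hR : ∀ s, R s = s ^ 2 / 2 - Ω 1 + d s)
    (σ : ℝ → ℝ → ℝ)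
    (hσ : ∀ s r, σ s r = ∫ p in (0:ℝ)..1,
        (1 / (2 * (Hp p s) ^ 2) - H p s - Ω p + Ω 1 + r) * Hp p s)
    (r sm sc sp : ℝ)
    (h1 : s₀ < sm) (h2 : sm < sc) (h3 : sc < sp)
    (hRm : R sm = r) (hRp : R sp = r)
    (hsign1 : ∀ s ∈ Ioo sm sp, R s < r)
    (hsign2 : ∀ s ∈ Ioo s₀ sm, r < R s)
    (hsign3 : ∀ s ∈ Ioi sp, r < R s) :
    StrictMonoOn (fun s => σ s r) (Ioo s₀ sm) ∧
    StrictAntiOn (fun s => σ s r) (Ioo sm sp) ∧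
    StrictMonoOn (fun s => σ s r) (Ioi sp) ∧
    Tendsto (fun s => σ s r) atTop atTop :=
  stmt7_general ω Ω hωcont hΩ s₀ hs₀ Hp H hHp hH d R hd hR σ hσ r sm sc sp h1 h2 h3 hsign1 hsign2
    hsign3
end

section
/- Let h solve the height-function problem with Bernoulli constant r, and for s = s₊(r) or s = s₋(r) (so that R(s) = r) set w = h - H(·;s). Then the surface boundary condition (1+h_q²)/(2h_p²) + h = r on p = 1 is equivalent to w_p/H_p³ - w = (w_q)²/(2h_p²) + (w_p)²(2h_p + H_p)/(2H_p³ h_p²) on p = 1. In particular, at any point q where w(q,1) > 0 one has w_p(q,1) > 0. -/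
open Real MeasureTheory Set Filter Topology

/- Writing `a = h_p` and `A = H_p(1)`, the laminar flow satisfies `1/(2A²) + H(1) = r`, so subtracting
its Bernoulli condition from that of `h` leaves `w + h_q²/(2a²) + 1/(2a²) - 1/(2A²) = 0`. The
linearisation of `1/(2a²)` at `A` is `-(a - A)/A³`, and the remainder
`(a - A)/A³ - 1/(2A²) + 1/(2a²) = (a - A)²(2a + A)/(2A³a²)` is nonnegative for `a, A > 0`. Hence
`w_p/A³ - w` is a sum of nonnegative terms, and `w > 0` forces `w_p > 0`. -/

lemma inv_sq_linearization_remainder {a A : ℝ} (ha : a ≠ 0) (hA : A ≠ 0) :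
    (a - A) / A ^ 3 - (1 / (2 * A ^ 2) - 1 / (2 * a ^ 2)) =
      (a - A) ^ 2 * (2 * a + A) / (2 * A ^ 3 * a ^ 2) := by
  field_simp
  ring

lemma bernoulli_iff_perturbation_eq {r H Hp h hq hp : ℝ} (hHp : Hp ≠ 0) (hhp : hp ≠ 0)
    (hlam : 1 / (2 * Hp ^ 2) + H = r) :
    (1 + hq ^ 2) / (2 * hp ^ 2) + h = r ↔
      (hp - Hp) / Hp ^ 3 - (h - H) =
        hq ^ 2 / (2 * hp ^ 2) + (hp - Hp) ^ 2 * (2 * hp + Hp) / (2 * Hp ^ 3 * hp ^ 2) := by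
  subst hlam
  rw [← inv_sq_linearization_remainder hhp hHp, add_div 1]
  constructor <;> intro h <;> linarith

lemma sub_pos_of_perturbation_eq {H Hp h hq hp : ℝ} (hHp : 0 < Hp) (hhp : 0 < hp)
    (heq : (hp - Hp) / Hp ^ 3 - (h - H) =
      hq ^ 2 / (2 * hp ^ 2) + (hp - Hp) ^ 2 * (2 * hp + Hp) / (2 * Hp ^ 3 * hp ^ 2))
    (hw : 0 < h - H) : 0 < hp - Hp := by
  have hrhs : 0 ≤ hq ^ 2 / (2 * hp ^ 2) + (hp - Hp) ^ 2 * (2 * hp + Hp) / (2 * Hp ^ 3 * hp ^ 2) := by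
    positivity
  have hdiv : 0 < (hp - Hp) / Hp ^ 3 := by linarith
  exact (div_pos_iff_of_pos_right (pow_pos hHp 3)).mp hdiv

theorem stmt14 (r H1 Hp1 : ℝ) (hHp1 : 0 < Hp1) (hlam : 1 / (2 * Hp1 ^ 2) + H1 = r)
    (h hq hp : ℝ → ℝ) (hppos : ∀ q, 0 < hp q) :
    ∀ q,
      (((1 + (hq q) ^ 2) / (2 * (hp q) ^ 2) + h q = r) ↔
        ((hp q - Hp1) / Hp1 ^ 3 - (h q - H1) =
          (hq q) ^ 2 / (2 * (hp q) ^ 2)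
            + (hp q - Hp1) ^ 2 * (2 * hp q + Hp1) / (2 * Hp1 ^ 3 * (hp q) ^ 2))) ∧
      (((1 + (hq q) ^ 2) / (2 * (hp q) ^ 2) + h q = r) →
        0 < h q - H1 → 0 < hp q - Hp1) := by
  intro q
  have hiff := bernoulli_iff_perturbation_eq (h := h q) (hq := hq q) hHp1.ne' (hppos q).ne' hlam
  exact ⟨hiff, fun hbc hw => sub_pos_of_perturbation_eq hHp1 (hppos q) (hiff.mp hbc) hw⟩
end

section
/- Define the flow force flux function Φ(q,p) = ∫₀^p ( (w_p)²/(h_p H_p²) - (w_q)²/h_p ) dp' where w = h - H(·;s). Then Φ_q = -w_q( (1+(w_q)²)/h_p² - 1/H_p² ) and Φ_p = (w_p)²/(h_p H_p²) - (w_q)²/h_p, where the first identity holds pointwise in S using the equation satisfied by h. -/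
open Real MeasureTheory Set Filter Topology
open scoped Interval

/-!
`Φ_p` is the integrand, by the fundamental theorem of calculus. For `Φ_q` we differentiate under
the integral sign. Because `h` solves its equation, the `q`-derivative of the integrand is the
`p`-derivative of `G = -h_q ((1 + h_q²) / h_p² - (s² - 2Ω))`, and `s² - 2Ω = 1 / H_p²`.
Integrating from `0` to `p` gives `Φ_q = G(p) - G(0)`, and `G(0) = 0` because `h(·, 0) = 0`
forces `h_q(·, 0) = 0`. The integrand of `Φ` is called the flow-force density, and `G` the flux.
-/

theorem rpow_neg_half_sq {a : ℝ} (ha : 0 ≤ a) : (a ^ (-(1 / 2) : ℝ)) ^ 2 = a⁻¹ := by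
  rw [← rpow_natCast, ← rpow_mul ha]
  norm_num [rpow_neg_one]

theorem ContinuousOn.integral_hasDerivAt_right {E : Type*} [NormedAddCommGroup E]
    [NormedSpace ℝ E] [CompleteSpace E] {f : ℝ → E} {U : Set ℝ} {a b : ℝ}
    (hf : ContinuousOn f U) (hU : IsOpen U) (hab : [[a, b]] ⊆ U) :
    HasDerivAt (fun u => ∫ x in a..u, f x) (f b) b :=
  have hb : b ∈ U := hab right_mem_uIcc
  intervalIntegral.integral_hasDerivAt_right ((hf.mono hab).intervalIntegrable)
    (hf.stronglyMeasurableAtFilter hU b hb) (hf.continuousAt (hU.mem_nhds hb))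

theorem hasDerivAt_integral_of_continuousOn_deriv
    {E : Type*} [NormedAddCommGroup E] [NormedSpace ℝ E] {F F' : ℝ → ℝ → E} {a b x₀ : ℝ}
    (hderiv : ∀ x, ∀ t ∈ [[a, b]], HasDerivAt (F · t) (F' x t) x)
    (hF : ∀ x, ContinuousOn (F x) [[a, b]])
    (hF' : ContinuousOn (fun z : ℝ × ℝ => F' z.1 z.2) (univ ×ˢ [[a, b]])) :
    HasDerivAt (fun x => ∫ t in a..b, F x t) (∫ t in a..b, F' x₀ t) x₀ := by
  have hF'x₀ : ContinuousOn (F' x₀) [[a, b]] :=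
    hF'.comp (Continuous.prodMk_right x₀).continuousOn fun t ht => ⟨mem_univ x₀, ht⟩
  obtain ⟨C, hC⟩ := ((isCompact_closedBall x₀ 1).prod isCompact_uIcc).exists_bound_of_continuousOn
    (hF'.mono (prod_mono (subset_univ _) subset_rfl))
  refine (intervalIntegral.hasDerivAt_integral_of_dominated_loc_of_deriv_le
    (bound := fun _ => C) (Metric.ball_mem_nhds x₀ one_pos)
    (.of_forall fun x => ((hF x).mono uIoc_subset_uIcc).aestronglyMeasurable measurableSet_uIoc)
    (hF x₀).intervalIntegrable
    ((hF'x₀.mono uIoc_subset_uIcc).aestronglyMeasurable measurableSet_uIoc)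
    (.of_forall fun t ht x hx =>
      hC (x, t) ⟨Metric.ball_subset_closedBall hx, uIoc_subset_uIcc ht⟩)
    intervalIntegrable_const
    (.of_forall fun t ht x _ => hderiv x t (uIoc_subset_uIcc ht))).2

section FlowForce

variable {X : Type*} [TopologicalSpace X] {H f g f' g' : X → ℝ} {s : Set X}

theorem ContinuousOn.flowForceDensity (hH : ContinuousOn H s) (hf : ContinuousOn f s)
    (hg : ContinuousOn g s) (hH0 : ∀ z ∈ s, H z ≠ 0) (hf0 : ∀ z ∈ s, f z ≠ 0) :
    ContinuousOn (fun z => (f z - H z) ^ 2 / (f z * H z ^ 2) - g z ^ 2 / f z) s := by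
  fun_prop (disch := simp_all)

theorem ContinuousOn.flowForceDensity_deriv (hH : ContinuousOn H s) (hf : ContinuousOn f s)
    (hg : ContinuousOn g s) (hf' : ContinuousOn f' s) (hg' : ContinuousOn g' s)
    (hH0 : ∀ z ∈ s, H z ≠ 0) (hf0 : ∀ z ∈ s, f z ≠ 0) :
    ContinuousOn
      (fun z => f' z / H z ^ 2 - (1 - g z ^ 2) * f' z / f z ^ 2 - 2 * g z * g' z / f z) s := by
  fun_prop (disch := simp_all)

end FlowForce

theorem HasDerivAt.flowForceDensity {f g : ℝ → ℝ} {f' g' x H : ℝ} (hf : HasDerivAt f f' x)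
    (hg : HasDerivAt g g' x) (hfx : f x ≠ 0) (hH : H ≠ 0) :
    HasDerivAt (fun x => (f x - H) ^ 2 / (f x * H ^ 2) - g x ^ 2 / f x)
      (f' / H ^ 2 - (1 - g x ^ 2) * f' / f x ^ 2 - 2 * g x * g' / f x) x := by
  refine ((((hf.sub_const H).pow 2).div (hf.mul_const (H ^ 2))
    (mul_ne_zero hfx (pow_ne_zero 2 hH))).sub ((hg.pow 2).div hf hfx)).congr_deriv ?_
  simp only [Pi.pow_apply]
  field_simp
  ring

theorem HasDerivAt.flowForceFlux {f g A : ℝ → ℝ} {f' g' A' t : ℝ} (hg : HasDerivAt g g' t)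
    (hf : HasDerivAt f f' t) (hA : HasDerivAt A A' t) (hft : f t ≠ 0) :
    HasDerivAt (fun t => -g t * ((1 + g t ^ 2) / f t ^ 2 - A t))
      (-g' * ((1 + g t ^ 2) / f t ^ 2 - A t)
        - g t * (2 * g t * g' / f t ^ 2 - 2 * (1 + g t ^ 2) * f' / f t ^ 3) + g t * A') t := by
  refine (hg.neg.mul ((((hg.pow 2).const_add 1).div (hf.pow 2) (pow_ne_zero 2 hft)).sub
    hA)).congr_deriv ?_
  simp only [Pi.pow_apply, Pi.neg_apply, Pi.sub_apply, Pi.div_apply]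
  field_simp
  ring

theorem flowForceDensity_deriv_eq_flux_deriv {hq hp hqq hqp hpp ω A H : ℝ} (hp0 : hp ≠ 0)
    (hH : H ^ 2 = A⁻¹)
    (heq : (1 + hq ^ 2) / hp ^ 2 * hpp - 2 * (hq / hp) * hqp + hqq - ω * hp = 0) :
    hqp / H ^ 2 - (1 - hq ^ 2) * hqp / hp ^ 2 - 2 * hq * hqq / hp =
      -hqp * ((1 + hq ^ 2) / hp ^ 2 - A)
        - hq * (2 * hq * hqp / hp ^ 2 - 2 * (1 + hq ^ 2) * hpp / hp ^ 3) + hq * -(2 * ω) := by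
  have hqq_eq : hqq = ω * hp + 2 * (hq / hp) * hqp - (1 + hq ^ 2) / hp ^ 2 * hpp := by
    linear_combination heq
  rw [hH, div_inv_eq_mul, hqq_eq]
  field_simp
  ring

theorem integral_flowForceDensity_deriv_eq_flux {g f g' f' k H A ω : ℝ → ℝ} {p : ℝ}
    (hg : ∀ t ∈ [[0, p]], HasDerivAt g (g' t) t) (hf : ∀ t ∈ [[0, p]], HasDerivAt f (f' t) t)
    (hA : ∀ t ∈ [[0, p]], HasDerivAt A (-(2 * ω t)) t) (hg'c : ContinuousOn g' [[0, p]])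
    (hkc : ContinuousOn k [[0, p]]) (hf0 : ∀ t ∈ [[0, p]], f t ≠ 0)
    (hH : ∀ t ∈ [[0, p]], H t ^ 2 = (A t)⁻¹)
    (heq : ∀ t ∈ [[0, p]],
      (1 + g t ^ 2) / f t ^ 2 * f' t - 2 * (g t / f t) * g' t + k t - ω t * f t = 0)
    (hg0 : g 0 = 0) :
    ∫ t in 0..p, (g' t / H t ^ 2 - (1 - g t ^ 2) * g' t / f t ^ 2 - 2 * g t * k t / f t) =
      -g p * ((1 + g p ^ 2) / f p ^ 2 - 1 / H p ^ 2) := by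
  have hflux : ∀ t ∈ [[0, p]], HasDerivAt (fun t => -g t * ((1 + g t ^ 2) / f t ^ 2 - A t))
      (g' t / H t ^ 2 - (1 - g t ^ 2) * g' t / f t ^ 2 - 2 * g t * k t / f t) t := by
    intro t ht
    rw [flowForceDensity_deriv_eq_flux_deriv (hf0 t ht) (hH t ht) (heq t ht)]
    exact (hg t ht).flowForceFlux (hf t ht) (hA t ht) (hf0 t ht)
  -- `H` is only known through `H² = A⁻¹`, so integrability goes through `A`.
  have hAc := HasDerivAt.continuousOn hA
  have hfc := HasDerivAt.continuousOn hf
  have hgc := HasDerivAt.continuousOn hg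
  have hc : ContinuousOn
      (fun t => g' t * A t - (1 - g t ^ 2) * g' t / f t ^ 2 - 2 * g t * k t / f t) [[0, p]] := by
    fun_prop (disch := simp_all)
  rw [intervalIntegral.integral_eq_sub_of_hasDerivAt hflux, hg0, hH p right_mem_uIcc, one_div,
    inv_inv]
  · ring
  · refine (hc.congr fun t ht => ?_).intervalIntegrable
    simp only [hH t ht, div_inv_eq_mul]

theorem hasDerivAt_integral_flowForceDensity {H : ℝ → ℝ} {hq hp hqq hqp : ℝ → ℝ → ℝ} {p : ℝ}
    (q : ℝ) (hhqq : ∀ x, ∀ t ∈ [[0, p]], HasDerivAt (fun x' => hq x' t) (hqq x t) x)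
    (hhpq : ∀ x, ∀ t ∈ [[0, p]], HasDerivAt (fun x' => hp x' t) (hqp x t) x)
    (hcq : Continuous fun z : ℝ × ℝ => hq z.1 z.2) (hcp : Continuous fun z : ℝ × ℝ => hp z.1 z.2)
    (hcqq : Continuous fun z : ℝ × ℝ => hqq z.1 z.2)
    (hcqp : Continuous fun z : ℝ × ℝ => hqp z.1 z.2)
    (hHc : ContinuousOn H [[0, p]]) (hH0 : ∀ t ∈ [[0, p]], H t ≠ 0)
    (hp0 : ∀ x, ∀ t ∈ [[0, p]], hp x t ≠ 0) :
    HasDerivAt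
      (fun x => ∫ t in 0..p, ((hp x t - H t) ^ 2 / (hp x t * H t ^ 2) - hq x t ^ 2 / hp x t))
      (∫ t in 0..p, (hqp q t / H t ^ 2 - (1 - hq q t ^ 2) * hqp q t / hp q t ^ 2
        - 2 * hq q t * hqq q t / hp q t)) q := by
  have hcH : ContinuousOn (fun z : ℝ × ℝ => H z.2) (univ ×ˢ [[0, p]]) :=
    hHc.comp continuous_snd.continuousOn fun z hz => hz.2
  have hH0' : ∀ z ∈ univ ×ˢ [[0, p]], H (z : ℝ × ℝ).2 ≠ 0 := fun z hz => hH0 z.2 hz.2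
  have hp0' : ∀ z ∈ univ ×ˢ [[0, p]], hp (z : ℝ × ℝ).1 z.2 ≠ 0 := fun z hz => hp0 z.1 z.2 hz.2
  have hFc := hcH.flowForceDensity hcp.continuousOn hcq.continuousOn hH0' hp0'
  exact hasDerivAt_integral_of_continuousOn_deriv
    (fun x t ht => (hhpq x t ht).flowForceDensity (hhqq x t ht) (hp0 x t ht) (hH0 t ht))
    (fun x => (hFc.comp (Continuous.prodMk_right x).continuousOn fun t ht => ⟨mem_univ x, ht⟩ :))
    (hcH.flowForceDensity_deriv hcp.continuousOn hcq.continuousOn hcqp.continuousOn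
      hcqq.continuousOn hH0' hp0')

theorem stmt15_general (ω Ω : ℝ → ℝ) (hΩ : ∀ p, HasDerivAt Ω (ω p) p)
    (s : ℝ) (hpos : ∀ p ∈ Icc (0:ℝ) 1, 0 < s ^ 2 - 2 * Ω p)
    (Hp : ℝ → ℝ) (hHp : ∀ p, Hp p = (s ^ 2 - 2 * Ω p) ^ (-(1/2) : ℝ))
    (h hq hp hqq hqp hpp : ℝ → ℝ → ℝ)
    (hhq : ∀ q p, HasDerivAt (fun q' => h q' p) (hq q p) q)
    (hhqq : ∀ q p, HasDerivAt (fun q' => hq q' p) (hqq q p) q)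
    (hhqp : ∀ q p, HasDerivAt (fun p' => hq q p') (hqp q p) p)
    (hhpq : ∀ q p, HasDerivAt (fun q' => hp q' p) (hqp q p) q)
    (hhpp : ∀ q p, HasDerivAt (fun p' => hp q p') (hpp q p) p)
    (hcont : Continuous fun z : ℝ × ℝ =>
      (hq z.1 z.2, hp z.1 z.2, hqq z.1 z.2, hqp z.1 z.2, hpp z.1 z.2))
    (hppos : ∀ q p, 0 < hp q p)
    (hbot : ∀ q, h q 0 = 0)
    (heq : ∀ q, ∀ p ∈ Icc (0:ℝ) 1,
      (1 + (hq q p) ^ 2) / (hp q p) ^ 2 * hpp q p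
        - 2 * (hq q p / hp q p) * hqp q p + hqq q p - ω p * hp q p = 0)
    (Φ : ℝ → ℝ → ℝ)
    (hΦ : ∀ q p, Φ q p = ∫ p' in (0:ℝ)..p,
        ((hp q p' - Hp p') ^ 2 / (hp q p' * (Hp p') ^ 2) - (hq q p') ^ 2 / hp q p')) :
    ∀ q, ∀ p ∈ Icc (0:ℝ) 1,
      HasDerivAt (fun p' => Φ q p')
        ((hp q p - Hp p) ^ 2 / (hp q p * (Hp p) ^ 2) - (hq q p) ^ 2 / hp q p) p ∧
      HasDerivAt (fun q' => Φ q' p)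
        (-(hq q p) * ((1 + (hq q p) ^ 2) / (hp q p) ^ 2 - 1 / (Hp p) ^ 2)) q := by
  intro q p ⟨h0p, hp1⟩
  set A : ℝ → ℝ := fun t => s ^ 2 - 2 * Ω t
  have hA : ∀ t, HasDerivAt A (-(2 * ω t)) t := fun t => by
    simpa using ((hΩ t).const_mul 2).const_sub (s ^ 2)
  have hAc : Continuous A := continuous_iff_continuousAt.2 fun t => (hA t).continuousAt
  set U := A ⁻¹' Ioi 0
  have hsub : [[0, p]] ⊆ Icc 0 1 := by rw [uIcc_of_le h0p]; exact Icc_subset_Icc_right hp1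
  have hsubU : [[0, p]] ⊆ U := fun t ht => hpos t (hsub ht)
  have hHp0 : ∀ t ∈ U, Hp t ≠ 0 := fun t ht => by rw [hHp]; exact (rpow_pos_of_pos ht _).ne'
  have hHp_sq : ∀ t ∈ U, Hp t ^ 2 = (A t)⁻¹ := fun t ht => by
    rw [hHp]; exact rpow_neg_half_sq ht.le
  have hHpc : ContinuousOn Hp U := by
    rw [funext hHp]; exact hAc.continuousOn.rpow_const fun t ht => Or.inl (ne_of_gt ht)
  have hq0 : hq q 0 = 0 :=
    (hhq q 0).unique (by simpa only [hbot] using hasDerivAt_const q (0 : ℝ))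
  have hcqp : Continuous fun z : ℝ × ℝ => hqp z.1 z.2 := hcont.snd.snd.snd.fst
  have hcqq : Continuous fun z : ℝ × ℝ => hqq z.1 z.2 := hcont.snd.snd.fst
  simp_rw [hΦ]
  constructor
  · refine ContinuousOn.integral_hasDerivAt_right ?_ (isOpen_Ioi.preimage hAc) hsubU
    exact hHpc.flowForceDensity (HasDerivAt.continuousOn fun t _ => hhpp q t)
      (HasDerivAt.continuousOn fun t _ => hhqp q t) hHp0 fun t _ => (hppos q t).ne'
  · refine (hasDerivAt_integral_flowForceDensity q (fun x t _ => hhqq x t) (fun x t _ => hhpq x t)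
      hcont.fst hcont.snd.fst hcqq hcqp (hHpc.mono hsubU) (fun t ht => hHp0 t (hsubU ht))
      fun x t _ => (hppos x t).ne').congr_deriv ?_
    exact integral_flowForceDensity_deriv_eq_flux (fun t _ => hhqp q t) (fun t _ => hhpp q t)
      (fun t _ => hA t) (hcqp.comp (.prodMk_right q)).continuousOn
      (hcqq.comp (.prodMk_right q)).continuousOn (fun t _ => (hppos q t).ne')
      (fun t ht => hHp_sq t (hsubU ht)) (fun t ht => heq q t (hsub ht)) hq0

theorem stmt15 (ω Ω : ℝ → ℝ) (hωc : Continuous ω) (hΩ : ∀ p, HasDerivAt Ω (ω p) p)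
    (s : ℝ) (hpos : ∀ p ∈ Icc (0:ℝ) 1, 0 < s ^ 2 - 2 * Ω p)
    (Hp : ℝ → ℝ) (hHp : ∀ p, Hp p = (s ^ 2 - 2 * Ω p) ^ (-(1/2) : ℝ))
    (h hq hp hqq hqp hpp : ℝ → ℝ → ℝ)
    (hhq : ∀ q p, HasDerivAt (fun q' => h q' p) (hq q p) q)
    (hhp : ∀ q p, HasDerivAt (h q) (hp q p) p)
    (hhqq : ∀ q p, HasDerivAt (fun q' => hq q' p) (hqq q p) q)
    (hhqp : ∀ q p, HasDerivAt (fun p' => hq q p') (hqp q p) p)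
    (hhpq : ∀ q p, HasDerivAt (fun q' => hp q' p) (hqp q p) q)
    (hhpp : ∀ q p, HasDerivAt (fun p' => hp q p') (hpp q p) p)
    (hcont : Continuous fun z : ℝ × ℝ =>
      (hq z.1 z.2, hp z.1 z.2, hqq z.1 z.2, hqp z.1 z.2, hpp z.1 z.2))
    (hppos : ∀ q p, 0 < hp q p)
    (hbot : ∀ q, h q 0 = 0)
    (heq : ∀ q, ∀ p ∈ Icc (0:ℝ) 1,
      (1 + (hq q p) ^ 2) / (hp q p) ^ 2 * hpp q p
        - 2 * (hq q p / hp q p) * hqp q p + hqq q p - ω p * hp q p = 0)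
    (Φ : ℝ → ℝ → ℝ)
    (hΦ : ∀ q p, Φ q p = ∫ p' in (0:ℝ)..p,
        ((hp q p' - Hp p') ^ 2 / (hp q p' * (Hp p') ^ 2) - (hq q p') ^ 2 / hp q p')) :
    ∀ q, ∀ p ∈ Icc (0:ℝ) 1,
      HasDerivAt (fun p' => Φ q p')
        ((hp q p - Hp p) ^ 2 / (hp q p * (Hp p) ^ 2) - (hq q p) ^ 2 / hp q p) p ∧
      HasDerivAt (fun q' => Φ q' p)
        (-(hq q p) * ((1 + (hq q p) ^ 2) / (hp q p) ^ 2 - 1 / (Hp p) ^ 2)) q :=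
  stmt15_general ω Ω hΩ s hpos Hp hHp h hq hp hqq hqp hpp hhq hhqq hhqp hhpq hhpp hcont hppos hbot
    heq Φ hΦ
end

section
/- With Φ, w, h, H as above and F the flow force constant of h, the boundary value of Φ on the surface satisfies Φ(q,1) = 2(F - σ(s;r)) - 2(r - R(s)) w(q,1) + (w(q,1))² for all q ∈ ℝ, and Φ(q,0) = 0. -/
/-!
Since `H_p⁻² = s² - 2Ω`, the integrand of `Φ` differs from twice the difference of the
flow-force integrands of `h` and `H` by `(s² - 2Ω(1) - 2r) w_p + (h² - H²)_p`, an exact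
derivative. Integrating over `[0, 1]` with `h = H = 0` at the bed leaves
`(s² - 2Ω(1) - 2r) w(q,1) + h(q,1)² - H(1)²`, which is `-2(r - R(s)) w(q,1) + w(q,1)²`
because `s² - 2Ω(1) = 2R(s) - 2H(1)`.
-/

open Real MeasureTheory Set Filter Topology

theorem rpow_neg_half_sq_mul_self {x : ℝ} (hx : 0 < x) : (x ^ (-(1/2) : ℝ)) ^ 2 * x = 1 := by
  rw [← Real.rpow_mul_natCast hx.le]; norm_num [Real.rpow_neg_one, hx.ne']

theorem hasDerivAt_integral_of_continuousOn {f : ℝ → ℝ} {U : Set ℝ} (hU : IsOpen U)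
    (hf : ContinuousOn f U) {a b : ℝ} (hab : uIcc a b ⊆ U) :
    HasDerivAt (fun u => ∫ t in a..u, f t) (f b) b :=
  have hb : b ∈ U := hab right_mem_uIcc
  intervalIntegral.integral_hasDerivAt_right ((hf.mono hab).intervalIntegrable)
    (hf.stronglyMeasurableAtFilter hU b hb) (hf.continuousAt (hU.mem_nhds hb))

theorem phiIntegrand_eq {a A u y Y Ωp Ω₁ r s : ℝ} (ha : a ≠ 0)
    (hA : A ^ 2 * (s ^ 2 - 2 * Ωp) = 1) :
    (a - A) ^ 2 / (a * A ^ 2) - u ^ 2 / a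
      = 2 * (((1 - u ^ 2) / (2 * a ^ 2) - y - Ωp + Ω₁ + r) * a)
        - 2 * ((1 / (2 * A ^ 2) - Y - Ωp + Ω₁ + r) * A)
        + ((s ^ 2 - 2 * Ω₁ - 2 * r) * (a - A) + 2 * (y * a - Y * A)) := by
  have hA0 : A ≠ 0 := by rintro rfl; norm_num at hA
  have hs : s ^ 2 = 1 / A ^ 2 + 2 * Ωp := by
    field_simp; linarith
  rw [hs]
  field_simp
  ring

theorem integral_phiIntegrand_eq {Ω h H hp Hp hq : ℝ → ℝ} {r s R : ℝ}
    (hΩ : ContinuousOn Ω (Icc 0 1))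
    (hh : ∀ p ∈ Icc (0:ℝ) 1, HasDerivAt h (hp p) p)
    (hH : ∀ p ∈ Icc (0:ℝ) 1, HasDerivAt H (Hp p) p)
    (hpc : ContinuousOn hp (Icc 0 1)) (Hpc : ContinuousOn Hp (Icc 0 1))
    (hqc : ContinuousOn hq (Icc 0 1))
    (hp_ne : ∀ p ∈ Icc (0:ℝ) 1, hp p ≠ 0)
    (hHp : ∀ p ∈ Icc (0:ℝ) 1, Hp p ^ 2 * (s ^ 2 - 2 * Ω p) = 1)
    (hR : R = s ^ 2 / 2 - Ω 1 + H 1) (h_zero : h 0 = 0) (H_zero : H 0 = 0) :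
    ∫ p in (0:ℝ)..1, ((hp p - Hp p) ^ 2 / (hp p * Hp p ^ 2) - hq p ^ 2 / hp p)
      = 2 * ((∫ p in (0:ℝ)..1,
              ((1 - hq p ^ 2) / (2 * hp p ^ 2) - h p - Ω p + Ω 1 + r) * hp p)
            - ∫ p in (0:ℝ)..1, (1 / (2 * Hp p ^ 2) - H p - Ω p + Ω 1 + r) * Hp p)
        - 2 * (r - R) * (h 1 - H 1) + (h 1 - H 1) ^ 2 := by
  have hIcc : uIcc (0:ℝ) 1 = Icc 0 1 := uIcc_of_le zero_le_one
  have Hp_ne : ∀ p ∈ Icc (0:ℝ) 1, Hp p ≠ 0 := fun p hpm hzero => by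
    simpa [hzero] using hHp p hpm
  have hc : ContinuousOn h (Icc 0 1) := fun p hpm => (hh p hpm).continuousAt.continuousWithinAt
  have Hc : ContinuousOn H (Icc 0 1) := fun p hpm => (hH p hpm).continuousAt.continuousWithinAt
  have hF : IntervalIntegrable
      (fun p => ((1 - hq p ^ 2) / (2 * hp p ^ 2) - h p - Ω p + Ω 1 + r) * hp p) volume 0 1 := by
    refine ContinuousOn.intervalIntegrable (hIcc ▸ ?_)
    fun_prop (disch := intro p hpm; have := hp_ne p hpm; positivity)
  have hσ : IntervalIntegrable
      (fun p => (1 / (2 * Hp p ^ 2) - H p - Ω p + Ω 1 + r) * Hp p) volume 0 1 := by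
    refine ContinuousOn.intervalIntegrable (hIcc ▸ ?_)
    fun_prop (disch := intro p hpm; have := Hp_ne p hpm; positivity)
  set ψ : ℝ → ℝ := fun p => (s ^ 2 - 2 * Ω 1 - 2 * r) * (h p - H p) + (h p ^ 2 - H p ^ 2)
  have hψ : ∀ p ∈ Icc (0:ℝ) 1, HasDerivAt ψ
      ((s ^ 2 - 2 * Ω 1 - 2 * r) * (hp p - Hp p) + 2 * (h p * hp p - H p * Hp p)) p := by
    intro p hpm
    refine ((((hh p hpm).sub (hH p hpm)).const_mul _).add
      (((hh p hpm).pow 2).sub ((hH p hpm).pow 2))).congr_deriv ?_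
    push_cast; ring
  have hψ' : IntervalIntegrable
      (fun p => (s ^ 2 - 2 * Ω 1 - 2 * r) * (hp p - Hp p) + 2 * (h p * hp p - H p * Hp p))
      volume 0 1 :=
    ContinuousOn.intervalIntegrable (hIcc ▸ by fun_prop)
  calc _ = ∫ p in (0:ℝ)..1,
          (2 * (((1 - hq p ^ 2) / (2 * hp p ^ 2) - h p - Ω p + Ω 1 + r) * hp p)
            - 2 * ((1 / (2 * Hp p ^ 2) - H p - Ω p + Ω 1 + r) * Hp p)
            + ((s ^ 2 - 2 * Ω 1 - 2 * r) * (hp p - Hp p) + 2 * (h p * hp p - H p * Hp p))) :=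
        intervalIntegral.integral_congr fun p hpm =>
          phiIntegrand_eq (hp_ne p (hIcc ▸ hpm)) (hHp p (hIcc ▸ hpm))
    _ = 2 * ((∫ p in (0:ℝ)..1,
              ((1 - hq p ^ 2) / (2 * hp p ^ 2) - h p - Ω p + Ω 1 + r) * hp p)
            - ∫ p in (0:ℝ)..1, (1 / (2 * Hp p ^ 2) - H p - Ω p + Ω 1 + r) * Hp p)
          + (ψ 1 - ψ 0) := by
      rw [intervalIntegral.integral_add ((hF.const_mul 2).sub (hσ.const_mul 2)) hψ',
        intervalIntegral.integral_sub (hF.const_mul 2) (hσ.const_mul 2),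
        intervalIntegral.integral_const_mul, intervalIntegral.integral_const_mul,
        intervalIntegral.integral_eq_sub_of_hasDerivAt (fun p hpm => hψ p (hIcc ▸ hpm)) hψ']
      ring
    _ = _ := by simp only [ψ, h_zero, H_zero, hR]; ring

theorem stmt16_general (ω Ω : ℝ → ℝ) (hΩ : ∀ p, HasDerivAt Ω (ω p) p)
    (r s : ℝ) (hpos : ∀ p ∈ Icc (0:ℝ) 1, 0 < s ^ 2 - 2 * Ω p)
    (Hp H : ℝ → ℝ) (hHp : ∀ p, Hp p = (s ^ 2 - 2 * Ω p) ^ (-(1/2) : ℝ))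
    (hH : ∀ p, H p = ∫ τ in (0:ℝ)..p, Hp τ)
    (Rs : ℝ) (hRs : Rs = s ^ 2 / 2 - Ω 1 + H 1)
    (h hq hp hqq hqp hpp : ℝ → ℝ → ℝ)
    (hhp : ∀ q p, HasDerivAt (h q) (hp q p) p)
    (hcont : Continuous fun z : ℝ × ℝ =>
      (hq z.1 z.2, hp z.1 z.2, hqq z.1 z.2, hqp z.1 z.2, hpp z.1 z.2))
    (hppos : ∀ q p, 0 < hp q p)
    (hbot : ∀ q, h q 0 = 0)
    (F : ℝ) (hF : ∀ q, F = ∫ p in (0:ℝ)..1,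
        ((1 - (hq q p) ^ 2) / (2 * (hp q p) ^ 2) - h q p - Ω p + Ω 1 + r) * hp q p)
    (σ : ℝ) (hσ : σ = ∫ p in (0:ℝ)..1,
        (1 / (2 * (Hp p) ^ 2) - H p - Ω p + Ω 1 + r) * Hp p)
    (Φ : ℝ → ℝ → ℝ)
    (hΦ : ∀ q p, Φ q p = ∫ p' in (0:ℝ)..p,
        ((hp q p' - Hp p') ^ 2 / (hp q p' * (Hp p') ^ 2) - (hq q p') ^ 2 / hp q p')) :
    ∀ q, Φ q 1 = 2 * (F - σ) - 2 * (r - Rs) * (h q 1 - H 1) + (h q 1 - H 1) ^ 2 ∧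
      Φ q 0 = 0 := by
  intro q
  have hΩc : Continuous Ω := continuous_iff_continuousAt.2 fun p => (hΩ p).continuousAt
  have hU : IsOpen {p | 0 < s ^ 2 - 2 * Ω p} := isOpen_lt continuous_const (by fun_prop)
  have hHpU : ContinuousOn Hp {p | 0 < s ^ 2 - 2 * Ω p} := by
    rw [funext hHp]
    exact fun p hpI => (ContinuousAt.rpow_const (by fun_prop) (Or.inl hpI.ne')).continuousWithinAt
  have hH' : ∀ p ∈ Icc (0:ℝ) 1, HasDerivAt H (Hp p) p := fun p hpI =>
    funext hH ▸ hasDerivAt_integral_of_continuousOn hU hHpU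
      ((uIcc_subset_Icc (left_mem_Icc.2 zero_le_one) hpI).trans hpos)
  have hqpc : Continuous fun p => (hq q p, hp q p) :=
    (hcont.comp (continuous_const.prodMk continuous_id)).fst.prodMk
      (hcont.comp (continuous_const.prodMk continuous_id)).snd.fst
  refine ⟨?_, by simp [hΦ]⟩
  rw [hΦ, hF q, hσ]
  exact integral_phiIntegrand_eq hΩc.continuousOn (fun p _ => hhp q p) hH'
    hqpc.snd.continuousOn (hHpU.mono hpos) hqpc.fst.continuousOn
    (fun p _ => (hppos q p).ne') (fun p hpI => hHp p ▸ rpow_neg_half_sq_mul_self (hpos p hpI))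
    hRs (hbot q) (by simp [hH])

theorem stmt16 (ω Ω : ℝ → ℝ) (hωc : Continuous ω) (hΩ : ∀ p, HasDerivAt Ω (ω p) p)
    (hΩ0 : Ω 0 = 0)
    (r s : ℝ) (hpos : ∀ p ∈ Icc (0:ℝ) 1, 0 < s ^ 2 - 2 * Ω p)
    (Hp H : ℝ → ℝ) (hHp : ∀ p, Hp p = (s ^ 2 - 2 * Ω p) ^ (-(1/2) : ℝ))
    (hH : ∀ p, H p = ∫ τ in (0:ℝ)..p, Hp τ)
    (Rs : ℝ) (hRs : Rs = s ^ 2 / 2 - Ω 1 + H 1)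
    (h hq hp hqq hqp hpp : ℝ → ℝ → ℝ)
    (hhq : ∀ q p, HasDerivAt (fun q' => h q' p) (hq q p) q)
    (hhp : ∀ q p, HasDerivAt (h q) (hp q p) p)
    (hhqq : ∀ q p, HasDerivAt (fun q' => hq q' p) (hqq q p) q)
    (hhqp : ∀ q p, HasDerivAt (fun p' => hq q p') (hqp q p) p)
    (hhpq : ∀ q p, HasDerivAt (fun q' => hp q' p) (hqp q p) q)
    (hhpp : ∀ q p, HasDerivAt (fun p' => hp q p') (hpp q p) p)
    (hcont : Continuous fun z : ℝ × ℝ =>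
      (hq z.1 z.2, hp z.1 z.2, hqq z.1 z.2, hqp z.1 z.2, hpp z.1 z.2))
    (hppos : ∀ q p, 0 < hp q p)
    (hbot : ∀ q, h q 0 = 0)
    (heq : ∀ q, ∀ p ∈ Icc (0:ℝ) 1,
      (1 + (hq q p) ^ 2) / (hp q p) ^ 2 * hpp q p
        - 2 * (hq q p / hp q p) * hqp q p + hqq q p - ω p * hp q p = 0)
    (htopbc : ∀ q, (1 + (hq q 1) ^ 2) / (2 * (hp q 1) ^ 2) + h q 1 = r)
    (F : ℝ) (hF : ∀ q, F = ∫ p in (0:ℝ)..1,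
        ((1 - (hq q p) ^ 2) / (2 * (hp q p) ^ 2) - h q p - Ω p + Ω 1 + r) * hp q p)
    (σ : ℝ) (hσ : σ = ∫ p in (0:ℝ)..1,
        (1 / (2 * (Hp p) ^ 2) - H p - Ω p + Ω 1 + r) * Hp p)
    (Φ : ℝ → ℝ → ℝ)
    (hΦ : ∀ q p, Φ q p = ∫ p' in (0:ℝ)..p,
        ((hp q p' - Hp p') ^ 2 / (hp q p' * (Hp p') ^ 2) - (hq q p') ^ 2 / hp q p')) :
    ∀ q, Φ q 1 = 2 * (F - σ) - 2 * (r - Rs) * (h q 1 - H 1) + (h q 1 - H 1) ^ 2 ∧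
      Φ q 0 = 0 :=
  stmt16_general ω Ω hΩ r s hpos Hp H hHp hH Rs hRs h hq hp hqq hqp hpp hhp hcont hppos hbot F hF σ
    hσ Φ hΦ
end
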